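/- The real part of the complex volume form calibrates via coordinate independence: for an oriented 3-dimensional subspace L of ℂ³ with oriented basis (f₁,f₂,f₃) and oriented orthonormal basis (f̃₁,f̃₂,f̃₃), writing f₁∧f₂∧f₃ = (det B) f̃₁∧f̃₂∧f̃₃, one has (Re Ω(f₁∧f₂∧f₃))² + (Im Ω(f₁∧f₂∧f₃))² = (det B)² · vol(f̃₁∧f̃₂∧f̃₃∧Jf̃₁∧Jf̃₂∧Jf̃₃). -/
import Mathlib


open Finset

/-- The complex volume form `Ω = dz₁∧dz₂∧dz₃` on `ℂ³`, evaluated on a triple of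
vectors. -/
def OmegaC (u v w : Fin 3 → ℂ) : ℂ :=
  Matrix.det !![u 0, u 1, u 2; v 0, v 1, v 2; w 0, w 1, w 2]

/-- The standard complex structure `J` on `ℝ⁶ ≅ ℂ³`: multiplication by `i`. -/
def Jc (v : Fin 3 → ℂ) : Fin 3 → ℂ := fun i => Complex.I * v i

/-- The real coordinates of a vector of `ℂ³` with respect to the standard real basis
`(e₁,e₂,e₃,Je₁,Je₂,Je₃)` of `ℝ⁶ ≅ ℂ³`. -/
def realCoords (v : Fin 3 → ℂ) : Fin 6 → ℝ :=
  ![(v 0).re, (v 1).re, (v 2).re, (v 0).im, (v 1).im, (v 2).im]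

/-- The standard volume form on `ℝ⁶ ≅ ℂ³`, evaluated on six vectors. -/
def vol6 (a b c d e f : Fin 3 → ℂ) : ℝ :=
  Matrix.det (Matrix.of ![realCoords a, realCoords b, realCoords c,
    realCoords d, realCoords e, realCoords f])

/-- Determinant of a block matrix `[[A, B], [-B, A]]` over `ℂ` factors as
`det(A - iB) · det(A + iB)`. -/
lemma det_blocks {n : Type*} [DecidableEq n] [Fintype n] (A B : Matrix n n ℂ) :
    (Matrix.fromBlocks A B (-B) A).det =
      (A - Complex.I • B).det * (A + Complex.I • B).det := by
  set X : Matrix (n ⊕ n) (n ⊕ n) ℂ :=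
    Matrix.fromBlocks 1 (Complex.I • 1) 1 (-(Complex.I • 1)) with hX
  set Y : Matrix (n ⊕ n) (n ⊕ n) ℂ :=
    Matrix.fromBlocks ((1/2 : ℂ) • 1) ((1/2 : ℂ) • 1)
      ((-(Complex.I)/2 : ℂ) • 1) ((Complex.I/2 : ℂ) • 1) with hY
  have hYX : Y * X = 1 := by
    rw [hX, hY, Matrix.fromBlocks_multiply, ← Matrix.fromBlocks_one, Matrix.fromBlocks_inj]
    refine ⟨?_, ?_, ?_, ?_⟩ <;>
      simp only [Matrix.smul_mul, Matrix.mul_smul, Matrix.one_mul, Matrix.mul_one, smul_smul,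
        Matrix.mul_neg, Matrix.neg_mul, smul_neg, neg_smul] <;>
      (match_scalars <;> simp [Complex.ext_iff] <;> ring)
  have hXM : X * (Matrix.fromBlocks A B (-B) A) =
      (Matrix.fromBlocks (A - Complex.I • B) 0 0 (A + Complex.I • B)) * X := by
    rw [hX, Matrix.fromBlocks_multiply, Matrix.fromBlocks_multiply, Matrix.fromBlocks_inj]
    refine ⟨?_, ?_, ?_, ?_⟩ <;>
      simp only [Matrix.smul_mul, Matrix.mul_smul, Matrix.one_mul, Matrix.mul_one, smul_smul,
        Matrix.mul_neg, Matrix.neg_mul, smul_neg, neg_smul, Matrix.sub_mul, Matrix.add_mul,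
        Matrix.zero_mul, sub_smul, add_smul, smul_sub, smul_add] <;>
      (match_scalars <;> simp [Complex.ext_iff] <;> ring)
  have key : Matrix.fromBlocks A B (-B) A =
      Y * ((Matrix.fromBlocks (A - Complex.I • B) 0 0 (A + Complex.I • B)) * X) := by
    rw [← hXM, ← Matrix.mul_assoc, hYX, Matrix.one_mul]
  have h : Y.det * X.det = 1 := by rw [← Matrix.det_mul, hYX, Matrix.det_one]
  rw [key, Matrix.det_mul, Matrix.det_mul, Matrix.det_fromBlocks_zero₁₂]
  linear_combination ((A - Complex.I • B).det * (A + Complex.I • B).det) * h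

set_option maxHeartbeats 2000000 in
/-- The volume-form matrix is a reindexed block matrix. -/
lemma vol6_matrix_eq (u v w : Fin 3 → ℂ) :
    Matrix.of ![realCoords u, realCoords v, realCoords w,
      realCoords (Jc u), realCoords (Jc v), realCoords (Jc w)] =
    (Matrix.fromBlocks
      !![(u 0).re, (u 1).re, (u 2).re; (v 0).re, (v 1).re, (v 2).re; (w 0).re, (w 1).re, (w 2).re]
      !![(u 0).im, (u 1).im, (u 2).im; (v 0).im, (v 1).im, (v 2).im; (w 0).im, (w 1).im, (w 2).im]
      (-!![(u 0).im, (u 1).im, (u 2).im; (v 0).im, (v 1).im, (v 2).im; (w 0).im, (w 1).im, (w 2).im])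
      !![(u 0).re, (u 1).re, (u 2).re; (v 0).re, (v 1).re, (v 2).re; (w 0).re, (w 1).re, (w 2).re]
      ).submatrix (finSumFinEquiv (m := 3) (n := 3)).symm finSumFinEquiv.symm := by
  ext i j
  fin_cases i <;> fin_cases j <;>
    simp [realCoords, Jc, Matrix.fromBlocks, finSumFinEquiv, Fin.addCases] <;> rfl

/-- The key pointwise identity: `|Ω(u,v,w)|² = vol(u,v,w,Ju,Jv,Jw)`. -/
lemma lemB (u v w : Fin 3 → ℂ) :
    (OmegaC u v w).re ^ 2 + (OmegaC u v w).im ^ 2 = vol6 u v w (Jc u) (Jc v) (Jc w) := by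
  set A : Matrix (Fin 3) (Fin 3) ℝ :=
    !![(u 0).re, (u 1).re, (u 2).re; (v 0).re, (v 1).re, (v 2).re;
       (w 0).re, (w 1).re, (w 2).re] with hA
  set Bm : Matrix (Fin 3) (Fin 3) ℝ :=
    !![(u 0).im, (u 1).im, (u 2).im; (v 0).im, (v 1).im, (v 2).im;
       (w 0).im, (w 1).im, (w 2).im] with hBm
  set z : ℂ := OmegaC u v w with hz
  have h1 : vol6 u v w (Jc u) (Jc v) (Jc w) = (Matrix.fromBlocks A Bm (-Bm) A).det := by
    rw [vol6, vol6_matrix_eq, Matrix.det_submatrix_equiv_self]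
  have hmap : ((Matrix.fromBlocks A Bm (-Bm) A).map (Complex.ofRealHom : ℝ →+* ℂ)) =
      Matrix.fromBlocks (A.map Complex.ofRealHom) (Bm.map Complex.ofRealHom)
        (-(Bm.map Complex.ofRealHom)) (A.map Complex.ofRealHom) := by
    ext (i | i) (j | j) <;> simp [Matrix.fromBlocks]
  have hplus : A.map (Complex.ofRealHom : ℝ →+* ℂ) + Complex.I • Bm.map Complex.ofRealHom =
      !![u 0, u 1, u 2; v 0, v 1, v 2; w 0, w 1, w 2] := by
    ext i j
    fin_cases i <;> fin_cases j <;>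
      simp [hA, hBm, Complex.ext_iff]
  have hminus : A.map (Complex.ofRealHom : ℝ →+* ℂ) - Complex.I • Bm.map Complex.ofRealHom =
      (!![u 0, u 1, u 2; v 0, v 1, v 2; w 0, w 1, w 2]).map (starRingEnd ℂ) := by
    ext i j
    fin_cases i <;> fin_cases j <;>
      simp [hA, hBm, Complex.ext_iff]
  have h2 : ((vol6 u v w (Jc u) (Jc v) (Jc w) : ℝ) : ℂ) = (starRingEnd ℂ) z * z := by
    rw [h1]
    have := (Complex.ofRealHom : ℝ →+* ℂ).map_det (Matrix.fromBlocks A Bm (-Bm) A)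
    rw [show ((((Matrix.fromBlocks A Bm (-Bm) A).det : ℝ)) : ℂ) =
        Complex.ofRealHom (Matrix.fromBlocks A Bm (-Bm) A).det from rfl, this, RingHom.mapMatrix_apply, hmap,
      det_blocks, hplus, hminus, ← RingHom.mapMatrix_apply, ← (starRingEnd ℂ).map_det]
    rfl
  have h3 := congrArg Complex.re h2
  rw [Complex.ofReal_re] at h3
  rw [h3]
  simp [Complex.mul_re]
  ring

set_option maxHeartbeats 2000000 in
/-- Multilinearity: `Ω(f₀,f₁,f₂) = det B · Ω(f̃₀,f̃₁,f̃₂)`. -/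
lemma lemA (ftil : Fin 3 → (Fin 3 → ℂ)) (B : Matrix (Fin 3) (Fin 3) ℝ)
    (f : Fin 3 → (Fin 3 → ℂ)) (hB : ∀ j, f j = ∑ i, B i j • ftil i) :
    OmegaC (f 0) (f 1) (f 2) = (B.det : ℂ) * OmegaC (ftil 0) (ftil 1) (ftil 2) := by
  have hfk : ∀ j k, f j k = ((B 0 j : ℝ) : ℂ) * ftil 0 k + ((B 1 j : ℝ) : ℂ) * ftil 1 k +
      ((B 2 j : ℝ) : ℂ) * ftil 2 k := by
    intro j k
    rw [hB j]
    simp [Fin.sum_univ_three, Complex.real_smul]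
  simp only [OmegaC, Matrix.det_fin_three, Matrix.cons_val', Matrix.cons_val_zero,
    Matrix.cons_val_one, Matrix.head_cons, Matrix.empty_val', Matrix.cons_val_fin_one,
    Matrix.head_fin_const, Matrix.cons_val_two, Matrix.tail_cons, Matrix.of_apply]
  simp only [hfk]
  push_cast
  ring

/-- Coordinate independence of the calibration identity: if `L` is an oriented
3-dimensional subspace of `ℂ³` with basis `(f₁,f₂,f₃)` and orthonormal basis
`(f̃₁,f̃₂,f̃₃)`, and `B` is the change-of-basis matrix (`fⱼ = Σᵢ Bᵢⱼ f̃ᵢ`, so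
`f₁∧f₂∧f₃ = (det B) f̃₁∧f̃₂∧f̃₃`), then
`(Re Ω(f₁∧f₂∧f₃))² + (Im Ω(f₁∧f₂∧f₃))² = (det B)² · vol(f̃₁∧f̃₂∧f̃₃∧Jf̃₁∧Jf̃₂∧Jf̃₃)`. -/
theorem calibration_coordinate_independence
    (L : Submodule ℝ (Fin 3 → ℂ)) (hL : Module.finrank ℝ L = 3)
    (f ftil : Fin 3 → (Fin 3 → ℂ))
    (hfL : ∀ j, f j ∈ L) (hftilL : ∀ j, ftil j ∈ L)
    (hf : LinearIndependent ℝ f)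
    (hortho : ∀ i j, (∑ k, (((ftil i) k).re * ((ftil j) k).re +
      ((ftil i) k).im * ((ftil j) k).im)) = if i = j then 1 else 0)
    (B : Matrix (Fin 3) (Fin 3) ℝ)
    (hB : ∀ j, f j = ∑ i, B i j • ftil i) :
    (OmegaC (f 0) (f 1) (f 2)).re ^ 2 + (OmegaC (f 0) (f 1) (f 2)).im ^ 2 =
      B.det ^ 2 * vol6 (ftil 0) (ftil 1) (ftil 2)
        (Jc (ftil 0)) (Jc (ftil 1)) (Jc (ftil 2)) := by
  rw [lemA ftil B f hB, ← lemB]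
  simp [Complex.mul_re, Complex.mul_im]
  ring
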